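/- Let V be an n-dimensional real vector space equipped with a nondegenerate symmetric bilinear form (·,·) of signature (n−2,2), and let C₁, C₂, C₁′, C₂′ ∈ V. Assume that for every (s,t) ∈ [0,1]², the bilinear form (·,·) is negative definite on the 2-dimensional subspace z(s,t) := span{B₁(s), B₂(t)} (equivalently, the 2×2 Gram matrix of (B₁(s), B₂(t)) is negative definite). Then there exists a positive definite quadratic form Q_S on V such that for all x ∈ V and all (s,t) ∈ [0,1]²: (x,x) + 2·R(x, z(s,t)) ≥ Q_S(x). -/

import Mathlib

/-!
On the `B`-orthogonal complement `z^⊥` of a negative definite plane `z` the form is positive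
definite: otherwise `z ⊕ ℝv` would be a nonpositive `3`-dimensional subspace, which must meet the
positive definite `(n - 2)`-dimensional span of the positive basis vectors. Writing `x = w + u`
with `w = pr_z x ∈ z` and `u ∈ z^⊥` gives `(x,x)_z = (u,u) - (w,w)`, a positive definite quadratic
form. The projection onto `z(s,t)` is given by Cramer's rule in terms of the Gram matrix of
`B₁(s), B₂(t)`, so these majorants form a continuous family over the compact square, and a
continuous family of positive definite forms over a compact set is bounded below by `ε‖x‖²` for a
Euclidean norm on `V`.
-/

open Set Module

theorem LinearIndependent.finrank_span_pair {K V : Type*} [DivisionRing K] [AddCommGroup V]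
    [Module K V] {b₁ b₂ : V} (hli : LinearIndependent K ![b₁, b₂]) :
    finrank K (Submodule.span K {b₁, b₂}) = 2 := by
  rw [← Matrix.range_cons_cons_empty, finrank_span_eq_card hli, Fintype.card_fin]

namespace LinearMap.BilinForm

variable {V : Type*} [AddCommGroup V] [Module ℝ V] (B : LinearMap.BilinForm ℝ V)

theorem apply_sum_smul_self_of_iIsOrtho {ι : Type*} [Fintype ι] {v : ι → V}
    (ho : B.iIsOrtho v) (c : ι → ℝ) :
    B (∑ i, c i • v i) (∑ i, c i • v i) = ∑ i, c i ^ 2 * B (v i) (v i) := by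
  simp only [map_sum, map_smul, LinearMap.sum_apply, LinearMap.smul_apply, smul_eq_mul]
  refine Finset.sum_congr rfl fun i _ => ?_
  rw [Finset.sum_eq_single i (fun j _ hji => by rw [ho hji, mul_zero])
    (by simp)]
  ring

theorem apply_self_pos_of_mem_span_of_iIsOrtho {ι : Type*} [Fintype ι] {v : ι → V}
    (ho : B.iIsOrtho v) (hpos : ∀ i, 0 < B (v i) (v i)) {x : V}
    (hx : x ∈ Submodule.span ℝ (Set.range v)) (hx0 : x ≠ 0) : 0 < B x x := by
  obtain ⟨c, rfl⟩ := (Submodule.mem_span_range_iff_exists_fun ℝ).1 hx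
  obtain ⟨i, hi⟩ : ∃ i, c i ≠ 0 := by
    by_contra! h
    exact hx0 (by simp [h])
  rw [B.apply_sum_smul_self_of_iIsOrtho ho]
  exact Finset.sum_pos' (fun j _ => mul_nonneg (sq_nonneg _) (hpos j).le)
    ⟨i, Finset.mem_univ i, mul_pos (by positivity) (hpos i)⟩

theorem exists_posDef_submodule_of_iIsOrtho {n : ℕ} (b : Basis (Fin n) ℝ V) (ho : B.iIsOrtho b)
    {k : ℕ} (hk : k ≤ n) (hpos : ∀ i : Fin n, (i : ℕ) < k → 0 < B (b i) (b i)) :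
    ∃ P : Submodule ℝ V, (∀ v ∈ P, v ≠ 0 → 0 < B v v) ∧ finrank ℝ P = k := by
  let v : Fin k → V := b ∘ Fin.castLE hk
  refine ⟨Submodule.span ℝ (Set.range v), fun x hx hx0 => ?_, ?_⟩
  · exact B.apply_self_pos_of_mem_span_of_iIsOrtho (v := v) (fun i j hij => ho (by simpa using hij))
      (fun i => hpos (Fin.castLE hk i) i.2) hx hx0
  · rw [finrank_span_eq_card (b.linearIndependent.comp _ (Fin.castLE_injective hk)),
      Fintype.card_fin]

theorem finrank_add_finrank_le_of_pos_of_nonpos [FiniteDimensional ℝ V] {P W : Submodule ℝ V}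
    (hP : ∀ v ∈ P, v ≠ 0 → 0 < B v v) (hW : ∀ w ∈ W, B w w ≤ 0) :
    finrank ℝ P + finrank ℝ W ≤ finrank ℝ V := by
  refine Submodule.finrank_add_finrank_le_of_disjoint (Submodule.disjoint_def.2 fun v hvP hvW => ?_)
  by_contra hv0
  exact (hP v hvP hv0).not_ge (hW v hvW)

theorem apply_self_pos_of_orthogonal [FiniteDimensional ℝ V] (hsymm : B.IsSymm)
    {P z : Submodule ℝ V} (hP : ∀ v ∈ P, v ≠ 0 → 0 < B v v) (hz : ∀ w ∈ z, w ≠ 0 → B w w < 0)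
    (hdim : finrank ℝ V ≤ finrank ℝ P + finrank ℝ z) {v : V} (hv : ∀ u ∈ z, B v u = 0)
    (hv0 : v ≠ 0) : 0 < B v v := by
  by_contra! hvv
  have hvz : v ∉ z := fun h => (hz v h hv0).ne (hv v h)
  have hW : ∀ w ∈ z ⊔ ℝ ∙ v, B w w ≤ 0 := by
    intro w hw
    obtain ⟨y, hy, _, hc, rfl⟩ := Submodule.mem_sup.1 hw
    obtain ⟨c, rfl⟩ := Submodule.mem_span_singleton.1 hc
    have hyv : B y v = 0 := by rw [← hsymm.eq]; exact hv y hy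
    have hyy : B y y ≤ 0 := by
      rcases eq_or_ne y 0 with rfl | hy0
      · simp
      · exact (hz y hy hy0).le
    simp only [map_add, map_smul, LinearMap.add_apply, LinearMap.smul_apply, smul_eq_mul,
      hyv, hv y hy]
    nlinarith [sq_nonneg c]
  have hdimW : finrank ℝ (z ⊔ ℝ ∙ v : Submodule ℝ V) = finrank ℝ z + 1 := by
    have := Submodule.finrank_sup_add_finrank_inf_eq z (ℝ ∙ v)
    rw [(Submodule.disjoint_span_singleton' hv0).2 hvz |>.eq_bot, finrank_bot,
      finrank_span_singleton hv0] at this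
    omega
  have := B.finrank_add_finrank_le_of_pos_of_nonpos hP hW
  omega

theorem apply_eq_zero_of_mem_span_pair {b₁ b₂ v : V} (h₁ : B v b₁ = 0) (h₂ : B v b₂ = 0) :
    ∀ u ∈ Submodule.span ℝ {b₁, b₂}, B v u = 0 := by
  intro u hu
  obtain ⟨α, β, rfl⟩ := Submodule.mem_span_pair.1 hu
  simp [h₁, h₂]

def gramDet (b₁ b₂ : V) : ℝ := B b₁ b₁ * B b₂ b₂ - B b₁ b₂ ^ 2

theorem gramDet_pos (hsymm : B.IsSymm) {b₁ b₂ : V} (hli : LinearIndependent ℝ ![b₁, b₂])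
    (hneg : ∀ w ∈ Submodule.span ℝ {b₁, b₂}, w ≠ 0 → B w w < 0) : 0 < B.gramDet b₁ b₂ := by
  have hb₁ : B b₁ b₁ < 0 :=
    hneg b₁ (Submodule.subset_span (by simp)) (LinearIndependent.ne_zero 0 hli)
  -- `w` is the component of `b₂` orthogonal to `b₁`, scaled by `-B b₁ b₁`
  set w := B b₁ b₂ • b₁ + (-B b₁ b₁) • b₂
  have hw0 : w ≠ 0 := fun h => hb₁.ne (neg_eq_zero.1 (LinearIndependent.pair_iff.1 hli _ _ h).2)
  have hww : B w w = B b₁ b₁ * B.gramDet b₁ b₂ := by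
    simp only [w, gramDet, map_add, map_smul, LinearMap.add_apply, LinearMap.smul_apply,
      smul_eq_mul, hsymm.eq b₂ b₁]
    ring
  have := hneg w (Submodule.mem_span_pair.2 ⟨_, _, rfl⟩) hw0
  rw [hww] at this
  exact pos_of_mul_neg_right this hb₁.le

-- Cramer's rule for the Gram system `B (w, bᵢ) = B (x, bᵢ)`, `w ∈ span {b₁, b₂}`.
noncomputable def planeProj (b₁ b₂ : V) : V →ₗ[ℝ] V :=
  (B.gramDet b₁ b₂)⁻¹ • ((B b₂ b₂ • B.flip b₁ - B b₁ b₂ • B.flip b₂).smulRight b₁ +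
    (B b₁ b₁ • B.flip b₂ - B b₁ b₂ • B.flip b₁).smulRight b₂)

theorem planeProj_apply (b₁ b₂ x : V) :
    B.planeProj b₁ b₂ x = (B.gramDet b₁ b₂)⁻¹ • ((B b₂ b₂ * B x b₁ - B b₁ b₂ * B x b₂) • b₁ +
      (B b₁ b₁ * B x b₂ - B b₁ b₂ * B x b₁) • b₂) := by
  simp [planeProj]

theorem planeProj_mem_span (b₁ b₂ x : V) : B.planeProj b₁ b₂ x ∈ Submodule.span ℝ {b₁, b₂} :=
  Submodule.mem_span_pair.2 ⟨_, _, by rw [planeProj_apply, smul_add, smul_smul, smul_smul]⟩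

theorem apply_sub_planeProj_eq_zero (hsymm : B.IsSymm) {b₁ b₂ : V} (hd : B.gramDet b₁ b₂ ≠ 0)
    (x : V) : ∀ u ∈ Submodule.span ℝ {b₁, b₂}, B (x - B.planeProj b₁ b₂ x) u = 0 := by
  have hs : B b₂ b₁ = B b₁ b₂ := hsymm.eq b₂ b₁
  apply apply_eq_zero_of_mem_span_pair <;>
  · simp only [planeProj_apply, smul_add, smul_smul, map_sub, map_add, map_smul,
      LinearMap.sub_apply, LinearMap.add_apply, LinearMap.smul_apply, smul_eq_mul, hs]
    field_simp
    unfold gramDet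
    ring

theorem eq_planeProj (hsymm : B.IsSymm) {b₁ b₂ : V} (hd : B.gramDet b₁ b₂ ≠ 0)
    (hneg : ∀ w ∈ Submodule.span ℝ {b₁, b₂}, w ≠ 0 → B w w < 0) {x w : V}
    (hw : w ∈ Submodule.span ℝ {b₁, b₂})
    (hperp : ∀ u ∈ Submodule.span ℝ {b₁, b₂}, B (x - w) u = 0) : w = B.planeProj b₁ b₂ x := by
  set p := B.planeProj b₁ b₂ x
  have hmem : p - w ∈ Submodule.span ℝ {b₁, b₂} :=
    Submodule.sub_mem _ (B.planeProj_mem_span b₁ b₂ x) hw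
  have hself : B (p - w) (p - w) = 0 :=
    calc B (p - w) (p - w) = B (x - w) (p - w) - B (x - p) (p - w) := by
          rw [← LinearMap.sub_apply, ← map_sub, sub_sub_sub_cancel_left]
      _ = 0 := by rw [hperp _ hmem, B.apply_sub_planeProj_eq_zero hsymm hd x _ hmem, sub_zero]
  by_contra hne
  exact (hneg _ hmem (sub_ne_zero.2 (Ne.symm hne))).ne hself

noncomputable def planeMajorant (b₁ b₂ : V) : QuadraticForm ℝ V :=
  LinearMap.BilinMap.toQuadraticMap B -
    (2 : ℝ) • LinearMap.BilinMap.toQuadraticMap (B.compl₁₂ (B.planeProj b₁ b₂) (B.planeProj b₁ b₂))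

theorem planeMajorant_apply (b₁ b₂ x : V) :
    B.planeMajorant b₁ b₂ x = B x x - 2 * B (B.planeProj b₁ b₂ x) (B.planeProj b₁ b₂ x) := by
  simp [planeMajorant]

theorem planeMajorant_posDef [FiniteDimensional ℝ V] (hsymm : B.IsSymm) {P : Submodule ℝ V}
    (hP : ∀ v ∈ P, v ≠ 0 → 0 < B v v) (hdim : finrank ℝ V ≤ finrank ℝ P + 2) {b₁ b₂ : V}
    (hli : LinearIndependent ℝ ![b₁, b₂])
    (hneg : ∀ w ∈ Submodule.span ℝ {b₁, b₂}, w ≠ 0 → B w w < 0) :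
    (B.planeMajorant b₁ b₂).PosDef := by
  intro x hx0
  rw [planeMajorant_apply]
  have hw := B.planeProj_mem_span b₁ b₂ x
  have hxw := B.apply_sub_planeProj_eq_zero hsymm (B.gramDet_pos hsymm hli hneg).ne' x
  set w := B.planeProj b₁ b₂ x
  have hsplit : B x x = B w w + B (x - w) (x - w) := by
    conv_lhs => rw [← sub_add_cancel x w]
    simp only [map_add, LinearMap.add_apply, hsymm.eq w (x - w), hxw w hw]
    ring
  rw [hsplit]
  rcases eq_or_ne (x - w) 0 with h | h
  · have := hneg w hw (sub_eq_zero.1 h ▸ hx0)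
    simp only [h, map_zero]
    linarith
  · have hww : B w w ≤ 0 := by
      rcases eq_or_ne w 0 with hw0 | hw0
      · simp [hw0]
      · exact (hneg w hw hw0).le
    have := B.apply_self_pos_of_orthogonal hsymm hP hneg (by rwa [hli.finrank_span_pair]) hxw h
    linarith

theorem continuousOn_planeMajorant {X : Type*} [TopologicalSpace X] [TopologicalSpace V]
    [IsModuleTopology ℝ V] [FiniteDimensional ℝ V] {b₁ b₂ : X → V} (h₁ : Continuous b₁)
    (h₂ : Continuous b₂) {S : Set X} (hd : ∀ p ∈ S, B.gramDet (b₁ p) (b₂ p) ≠ 0) :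
    ContinuousOn (fun q : X × V => B.planeMajorant (b₁ q.1) (b₂ q.1) q.2) (S ×ˢ univ) := by
  have := IsModuleTopology.toContinuousAdd ℝ V
  have hB : Continuous fun q : V × V => B q.1 q.2 := by fun_prop
  have hdet : ContinuousOn (fun q : X × V => (B.gramDet (b₁ q.1) (b₂ q.1))⁻¹) (S ×ˢ univ) := by
    refine ContinuousOn.inv₀ (Continuous.continuousOn ?_) fun q hq => hd q.1 hq.1
    unfold gramDet
    fun_prop
  have hproj : ContinuousOn (fun q : X × V => B.planeProj (b₁ q.1) (b₂ q.1) q.2) (S ×ˢ univ) := by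
    simp only [planeProj_apply]
    exact hdet.smul (Continuous.continuousOn (by fun_prop))
  simp only [planeMajorant_apply]
  exact (hB.comp (continuous_snd.prodMk continuous_snd)).continuousOn.sub
    (continuousOn_const.mul (hB.comp_continuousOn (hproj.prodMk hproj)))

end LinearMap.BilinForm

theorem QuadraticMap.exists_pos_mul_norm_sq_le {X E : Type*} [TopologicalSpace X]
    [NormedAddCommGroup E] [NormedSpace ℝ E] [FiniteDimensional ℝ E] {S : Set X}
    (hS : IsCompact S) (Q : X → QuadraticForm ℝ E)
    (hQ : ContinuousOn (fun q : X × E => Q q.1 q.2) (S ×ˢ univ)) (hpos : ∀ p ∈ S, (Q p).PosDef) :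
    ∃ ε > 0, ∀ p ∈ S, ∀ x, ε * ‖x‖ ^ 2 ≤ Q p x := by
  obtain ⟨ε, hε, hle⟩ := (hS.prod (isCompact_sphere (0 : E) 1)).exists_forall_le'
    (hQ.mono (prod_mono_right (subset_univ _)))
    (fun q hq => hpos q.1 hq.1 q.2 (ne_zero_of_mem_unit_sphere ⟨q.2, hq.2⟩))
  refine ⟨ε, hε, fun p hp x => ?_⟩
  rcases eq_or_ne x 0 with rfl | hx0
  · simp
  have hx : 0 < ‖x‖ := norm_pos_iff.2 hx0
  have := hle (p, ‖x‖⁻¹ • x) ⟨hp, by simp [norm_smul, hx.ne']⟩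
  rw [QuadraticMap.map_smul, smul_eq_mul] at this
  calc ε * ‖x‖ ^ 2 ≤ ‖x‖⁻¹ * ‖x‖⁻¹ * Q p x * ‖x‖ ^ 2 := by gcongr
    _ = Q p x := by field_simp

theorem QuadraticMap.exists_posDef_le {X V : Type*} [TopologicalSpace X] [AddCommGroup V]
    [Module ℝ V] [TopologicalSpace V] [IsModuleTopology ℝ V] [FiniteDimensional ℝ V]
    {S : Set X} (hS : IsCompact S) (Q : X → QuadraticForm ℝ V)
    (hQ : ContinuousOn (fun q : X × V => Q q.1 q.2) (S ×ˢ univ)) (hpos : ∀ p ∈ S, (Q p).PosDef) :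
    ∃ Q₀ : QuadraticForm ℝ V, Q₀.PosDef ∧ ∀ p ∈ S, ∀ x, Q₀ x ≤ Q p x := by
  let E := EuclideanSpace ℝ (Fin (finrank ℝ V))
  let e : V ≃ₗ[ℝ] E := LinearEquiv.ofFinrankEq V E finrank_euclideanSpace_fin.symm
  have : IsModuleTopology ℝ E := isModuleTopologyOfFiniteDimensional
  have := IsModuleTopology.toContinuousAdd ℝ V
  have he : Continuous e.symm := IsModuleTopology.continuous_of_linearMap e.symm.toLinearMap
  obtain ⟨ε, hε, hle⟩ := exists_pos_mul_norm_sq_le hS (fun p => (Q p).comp e.symm.toLinearMap)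
    (hQ.comp (continuous_fst.prodMk (he.comp continuous_snd)).continuousOn
      fun q hq => ⟨hq.1, mem_univ _⟩)
    fun p hp x hx => hpos p hp _ (e.symm.map_ne_zero_iff.2 hx)
  refine ⟨ε • (LinearMap.BilinMap.toQuadraticMap (innerₗ E)).comp e.toLinearMap, ?_, ?_⟩
  · intro x hx
    have : 0 < ‖e x‖ := norm_pos_iff.2 (e.map_ne_zero_iff.2 hx)
    simpa [real_inner_self_eq_norm_sq] using mul_pos hε (pow_pos this 2)
  · intro p hp x
    simpa [real_inner_self_eq_norm_sq] using hle p hp (e x)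

theorem exists_posDef_minorant
    {V : Type*} [AddCommGroup V] [Module ℝ V]
    (n : ℕ)
    (B : LinearMap.BilinForm ℝ V) (hsymm : B.IsSymm)
    (bsig : Module.Basis (Fin n) ℝ V)
    (horth : ∀ i j, i ≠ j → B (bsig i) (bsig j) = 0)
    (hsig : ∀ i : Fin n, ((i : ℕ) < n - 2 → 0 < B (bsig i) (bsig i)) ∧
        (n - 2 ≤ (i : ℕ) → B (bsig i) (bsig i) < 0))
    (C₁ C₂ C₁' C₂' : V)
    (hneg : ∀ s ∈ Icc (0:ℝ) 1, ∀ t ∈ Icc (0:ℝ) 1,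
      LinearIndependent ℝ ![(1 - s) • C₁ + s • C₁', (1 - t) • C₂ + t • C₂'] ∧
      ∀ w ∈ Submodule.span ℝ {(1 - s) • C₁ + s • C₁', (1 - t) • C₂ + t • C₂'},
        w ≠ 0 → B w w < 0) :
    ∃ Q : QuadraticForm ℝ V, Q.PosDef ∧
      ∀ x : V, ∀ s ∈ Icc (0:ℝ) 1, ∀ t ∈ Icc (0:ℝ) 1,
        ∀ w ∈ Submodule.span ℝ {(1 - s) • C₁ + s • C₁', (1 - t) • C₂ + t • C₂'},
          (∀ u ∈ Submodule.span ℝ {(1 - s) • C₁ + s • C₁', (1 - t) • C₂ + t • C₂'},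
            B (x - w) u = 0) →
          B x x - 2 * B w w ≥ Q x := by
  have : FiniteDimensional ℝ V := .of_basis bsig
  let : TopologicalSpace V := moduleTopology ℝ V
  have : IsModuleTopology ℝ V := ⟨rfl⟩
  have := IsModuleTopology.toContinuousAdd ℝ V
  let b₁ : ℝ → V := fun s => (1 - s) • C₁ + s • C₁'
  let b₂ : ℝ → V := fun t => (1 - t) • C₂ + t • C₂'
  let square := Icc (0:ℝ) 1 ×ˢ Icc (0:ℝ) 1
  have hd (p) (hp : p ∈ square) : B.gramDet (b₁ p.1) (b₂ p.2) ≠ 0 :=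
    (B.gramDet_pos hsymm (hneg _ hp.1 _ hp.2).1 (hneg _ hp.1 _ hp.2).2).ne'
  obtain ⟨P, hP, hPdim⟩ := B.exists_posDef_submodule_of_iIsOrtho bsig (fun i j => horth i j)
    (Nat.sub_le n 2) fun i => (hsig i).1
  have hdim : finrank ℝ V ≤ finrank ℝ P + 2 := by
    rw [finrank_eq_card_basis bsig, Fintype.card_fin, hPdim]
    omega
  have hc₁ : Continuous fun p : ℝ × ℝ => b₁ p.1 := by fun_prop
  have hc₂ : Continuous fun p : ℝ × ℝ => b₂ p.2 := by fun_prop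
  obtain ⟨Q, hQ, hle⟩ := QuadraticMap.exists_posDef_le (isCompact_Icc.prod isCompact_Icc) _
    (B.continuousOn_planeMajorant hc₁ hc₂ hd)
    fun p hp => B.planeMajorant_posDef hsymm hP hdim (hneg _ hp.1 _ hp.2).1 (hneg _ hp.1 _ hp.2).2
  refine ⟨Q, hQ, fun x s hs t ht w hw hxw => ?_⟩
  rw [B.eq_planeProj hsymm (hd (s, t) ⟨hs, ht⟩) (hneg s hs t ht).2 hw hxw, ← B.planeMajorant_apply]
  exact hle (s, t) ⟨hs, ht⟩ x
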